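/- Let G be a critical graph and let xy be an edge of G with d_G(x) + d_G(y) = Δ(G) + 2. Then every vertex of (N(x) ∪ N(y)) \ {x, y} has degree Δ(G), where N(v) denotes the set of neighbors of v. -/

import Mathlib

/-!
Colour `G - xy` with `k = max (χ'(G - xy), Δ) < χ'(G)` colours. No colour is missing at both
`x` and `y` (else `xy` could be coloured too), while `x` and `y` see only
`d(x) - 1 + d(y) - 1 = Δ ≤ k` colours, so the colour sets at `x` and `y` are disjoint. Let
`u ≠ y` be a neighbour of `x` missing a colour `β`. If `β` is also missing at `x`, recolour `xu`
with `β`: its old colour is then missing at `x` and at `y`. Otherwise `β` is missing at `y`;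
take `γ` missing at `x`. The `(β, γ)`-Kempe subgraph has maximum degree two, and `x`, `y`, `u`
have degree at most one in it, so they do not all lie in one component. Swapping the chain at
`x` if it avoids `y` frees `β` at `x` while it stays missing at `y`; swapping the chain at `u`
if it avoids `x` frees `γ` at `u` and reduces to the first case.
-/

open SimpleGraph

variable {V : Type*}

/-- `c` is a proper edge coloring of `G` using colors `0, …, n-1`:
every edge gets a color `< n`, and distinct edges sharing an endpoint
receive distinct colors. -/
def IsProperEdgeColoring (G : SimpleGraph V) (n : ℕ) (c : Sym2 V → ℕ) : Prop :=
  (∀ e ∈ G.edgeSet, c e < n) ∧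
    ∀ e₁ ∈ G.edgeSet, ∀ e₂ ∈ G.edgeSet, e₁ ≠ e₂ → (∃ v, v ∈ e₁ ∧ v ∈ e₂) →
      c e₁ ≠ c e₂

/-- The edge chromatic number `χ'(G)`: the least number of colors in a proper
edge coloring of `G`. -/
noncomputable def edgeChromaticNumber (G : SimpleGraph V) : ℕ :=
  sInf {n | ∃ c, IsProperEdgeColoring G n c}

/-- The degree `d_G(v)` of a vertex. -/
noncomputable def deg (G : SimpleGraph V) (v : V) : ℕ := (G.neighborSet v).ncard

/-- The maximum vertex degree `Δ(G)`. -/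
noncomputable def maxDeg (G : SimpleGraph V) : ℕ := sSup {d | ∃ v, deg G v = d}

/-- `G` is critical: it is class 2 (i.e. `χ'(G) ≠ Δ(G)`) and every proper
subgraph `H` of `G` satisfies `χ'(H) < χ'(G)`. -/
def IsCritical (G : SimpleGraph V) : Prop :=
  edgeChromaticNumber G ≠ maxDeg G ∧
    ∀ H : G.Subgraph, H ≠ ⊤ → edgeChromaticNumber H.coe < edgeChromaticNumber G

/-- `G` is `k`-critical: critical with maximum degree `k`. -/
def IsKCritical (G : SimpleGraph V) (k : ℕ) : Prop :=
  IsCritical G ∧ maxDeg G = k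

namespace IsProperEdgeColoring

variable {W : Type*} {G H : SimpleGraph V} {n m : ℕ} {c : Sym2 V → ℕ}

theorem mono (hc : IsProperEdgeColoring G n c) (hnm : n ≤ m) : IsProperEdgeColoring G m c :=
  ⟨fun e he => (hc.1 e he).trans_le hnm, hc.2⟩

theorem mono_left (hc : IsProperEdgeColoring G n c) (hHG : H ≤ G) :
    IsProperEdgeColoring H n c :=
  ⟨fun e he => hc.1 e (edgeSet_mono hHG he),
    fun e₁ he₁ e₂ he₂ => hc.2 e₁ (edgeSet_mono hHG he₁) e₂ (edgeSet_mono hHG he₂)⟩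

theorem comap {G' : SimpleGraph W} {c : Sym2 W → ℕ} (hc : IsProperEdgeColoring G' n c)
    (f : G →g G') (hf : Function.Injective f) : IsProperEdgeColoring G n (c ∘ Sym2.map f) :=
  ⟨fun _ he => hc.1 _ (f.map_mem_edgeSet he),
    fun _ he₁ _ he₂ hne ⟨v, hv₁, hv₂⟩ =>
      hc.2 _ (f.map_mem_edgeSet he₁) _ (f.map_mem_edgeSet he₂)
        (fun h => hne (Sym2.map.injective hf h))
        ⟨f v, Sym2.mem_map.2 ⟨v, hv₁, rfl⟩, Sym2.mem_map.2 ⟨v, hv₂, rfl⟩⟩⟩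

theorem ne_of_adj (hc : IsProperEdgeColoring G n c) {v w₁ w₂ : V} (h₁ : G.Adj v w₁)
    (h₂ : G.Adj v w₂) (hw : w₁ ≠ w₂) : c s(v, w₁) ≠ c s(v, w₂) :=
  hc.2 _ h₁ _ h₂ (hw ∘ Sym2.congr_right.1) ⟨v, Sym2.mem_mk_left _ _, Sym2.mem_mk_left _ _⟩

end IsProperEdgeColoring

theorem exists_isProperEdgeColoring [Finite V] (G : SimpleGraph V) :
    ∃ n c, IsProperEdgeColoring G n c := by
  obtain ⟨n, ⟨e⟩⟩ := Finite.exists_equiv_fin (Sym2 V)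
  exact ⟨n, fun s => e s, fun s _ => (e s).isLt,
    fun _ _ _ _ hne _ h => hne (e.injective (Fin.val_injective h))⟩

theorem exists_isProperEdgeColoring_edgeChromaticNumber [Finite V] (G : SimpleGraph V) :
    ∃ c, IsProperEdgeColoring G (edgeChromaticNumber G) c :=
  Nat.sInf_mem (exists_isProperEdgeColoring G)

theorem edgeChromaticNumber_le {G : SimpleGraph V} {n : ℕ} {c : Sym2 V → ℕ}
    (hc : IsProperEdgeColoring G n c) : edgeChromaticNumber G ≤ n :=
  Nat.sInf_le ⟨c, hc⟩

def edgeColorsAt (G : SimpleGraph V) (c : Sym2 V → ℕ) (v : V) : Set ℕ :=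
  (fun w => c s(v, w)) '' G.neighborSet v

section edgeColorsAt

variable {G H : SimpleGraph V} {n : ℕ} {c : Sym2 V → ℕ} {v : V}

theorem mem_edgeColorsAt {a : ℕ} :
    a ∈ edgeColorsAt G c v ↔ ∃ w, G.Adj v w ∧ c s(v, w) = a :=
  Iff.rfl

theorem apply_mem_edgeColorsAt {e : Sym2 V} (he : e ∈ G.edgeSet) (hv : v ∈ e) :
    c e ∈ edgeColorsAt G c v := by
  obtain ⟨w, rfl⟩ := Sym2.mem_iff_exists.1 hv
  exact ⟨w, he, rfl⟩

theorem edgeColorsAt_mono (hHG : H ≤ G) : edgeColorsAt H c v ⊆ edgeColorsAt G c v :=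
  Set.image_mono fun _ h => hHG h

theorem IsProperEdgeColoring.edgeColorsAt_subset (hc : IsProperEdgeColoring G n c) :
    edgeColorsAt G c v ⊆ Set.Iio n := by
  rintro _ ⟨w, hw, rfl⟩
  exact hc.1 _ hw

theorem IsProperEdgeColoring.ncard_edgeColorsAt (hc : IsProperEdgeColoring G n c) :
    (edgeColorsAt G c v).ncard = deg G v :=
  Set.InjOn.ncard_image fun _ h₁ _ h₂ h => by_contra fun hne => hc.ne_of_adj h₁ h₂ hne h

theorem IsProperEdgeColoring.deg_le (hc : IsProperEdgeColoring G n c) : deg G v ≤ n := by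
  rw [← hc.ncard_edgeColorsAt, ← Set.ncard_Iio_nat n]
  exact Set.ncard_le_ncard hc.edgeColorsAt_subset (Set.finite_Iio n)

theorem IsProperEdgeColoring.exists_notMem_edgeColorsAt (hc : IsProperEdgeColoring G n c)
    (hv : deg G v < n) : ∃ a < n, a ∉ edgeColorsAt G c v := by
  rw [← hc.ncard_edgeColorsAt, ← Set.ncard_Iio_nat n] at hv
  exact Set.exists_mem_notMem_of_ncard_lt_ncard hv
    ((Set.finite_Iio n).subset hc.edgeColorsAt_subset)

end edgeColorsAt

theorem deg_le_maxDeg [Finite V] (G : SimpleGraph V) (v : V) : deg G v ≤ maxDeg G :=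
  le_csSup ⟨Nat.card V, by rintro _ ⟨w, rfl⟩; exact Set.ncard_le_card _⟩ ⟨v, rfl⟩

theorem maxDeg_le_edgeChromaticNumber [Finite V] (G : SimpleGraph V) :
    maxDeg G ≤ edgeChromaticNumber G := by
  obtain ⟨c, hc⟩ := exists_isProperEdgeColoring_edgeChromaticNumber G
  exact csSup_le' (by rintro _ ⟨v, rfl⟩; exact hc.deg_le)

theorem deg_mono [Finite V] {G H : SimpleGraph V} (hHG : H ≤ G) (v : V) : deg H v ≤ deg G v :=
  Set.ncard_le_ncard fun _ h => hHG h

theorem deg_deleteEdges_add_one [Finite V] {G : SimpleGraph V} {x y : V} (h : G.Adj x y) :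
    deg (G.deleteEdges {s(x, y)}) x + 1 = deg G x := by
  have : (G.deleteEdges {s(x, y)}).neighborSet x = G.neighborSet x \ {y} := by
    ext w
    simp only [mem_neighborSet, deleteEdges_adj, Set.mem_singleton_iff, Sym2.congr_right,
      Set.mem_sdiff]
  rw [deg, this, Set.ncard_sdiff_singleton_add_one (show y ∈ G.neighborSet x from h), deg]

theorem IsProperEdgeColoring.update_of_deleteEdges [DecidableEq V] {G : SimpleGraph V}
    {x y : V} {n a : ℕ} {c : Sym2 V → ℕ}
    (hc : IsProperEdgeColoring (G.deleteEdges {s(x, y)}) n c) (ha : a < n)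
    (hx : a ∉ edgeColorsAt (G.deleteEdges {s(x, y)}) c x)
    (hy : a ∉ edgeColorsAt (G.deleteEdges {s(x, y)}) c y) :
    IsProperEdgeColoring G n (Function.update c s(x, y) a) := by
  have hmem : ∀ e ∈ G.edgeSet, e ≠ s(x, y) → e ∈ (G.deleteEdges {s(x, y)}).edgeSet :=
    fun e he hne => by rw [edgeSet_deleteEdges]; exact ⟨he, hne⟩
  have hmissing : ∀ e ∈ G.edgeSet, e ≠ s(x, y) → ∀ v ∈ e, v ∈ s(x, y) → c e ≠ a := by
    intro e he hne v hve hv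
    rcases Sym2.mem_iff.1 hv with rfl | rfl
    · exact fun h => hx (h ▸ apply_mem_edgeColorsAt (hmem e he hne) hve)
    · exact fun h => hy (h ▸ apply_mem_edgeColorsAt (hmem e he hne) hve)
  refine ⟨fun e he => ?_, fun e₁ he₁ e₂ he₂ hne ⟨v, hv₁, hv₂⟩ => ?_⟩
  · rcases eq_or_ne e s(x, y) with rfl | h
    · simpa using ha
    · simpa [h] using hc.1 e (hmem e he h)
  · rcases eq_or_ne e₁ s(x, y) with rfl | h₁ <;> rcases eq_or_ne e₂ s(x, y) with rfl | h₂
    · exact absurd rfl hne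
    · simpa [h₂] using (hmissing e₂ he₂ h₂ v hv₂ hv₁).symm
    · simpa [h₁] using hmissing e₁ he₁ h₁ v hv₁ hv₂
    · simpa [h₁, h₂] using
        hc.2 e₁ (hmem e₁ he₁ h₁) e₂ (hmem e₂ he₂ h₂) hne ⟨v, hv₁, hv₂⟩

theorem IsCritical.edgeChromaticNumber_deleteEdges_lt [Finite V] {G : SimpleGraph V}
    (hG : IsCritical G) {e : Sym2 V} (he : e ∈ G.edgeSet) :
    edgeChromaticNumber (G.deleteEdges {e}) < edgeChromaticNumber G := by
  set H : G.Subgraph := (⊤ : G.Subgraph).deleteEdges {e}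
  have hH : H ≠ ⊤ := fun h => by
    induction e using Sym2.ind with
    | _ a b =>
      have : H.Adj a b := h ▸ he
      simp [H] at this
  let f : G.deleteEdges {e} →g H.coe :=
    { toFun := fun v => ⟨v, by simp [H]⟩
      map_rel' := fun h => by simpa [H, Subgraph.coe] using h }
  obtain ⟨c, hc⟩ := exists_isProperEdgeColoring_edgeChromaticNumber H.coe
  exact (edgeChromaticNumber_le (hc.comap f fun _ _ h => congrArg Subtype.val h)).trans_lt
    (hG.2 H hH)

theorem disjoint_edgeColorsAt_of_deleteEdges {G : SimpleGraph V} {x y : V} {n : ℕ}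
    {c : Sym2 V → ℕ} (hG : ∀ c', ¬IsProperEdgeColoring G n c')
    (hc : IsProperEdgeColoring (G.deleteEdges {s(x, y)}) n c)
    (hdeg : deg (G.deleteEdges {s(x, y)}) x + deg (G.deleteEdges {s(x, y)}) y ≤ n) :
    Disjoint (edgeColorsAt (G.deleteEdges {s(x, y)}) c x)
      (edgeColorsAt (G.deleteEdges {s(x, y)}) c y) := by
  classical
  set A := edgeColorsAt (G.deleteEdges {s(x, y)}) c x
  set B := edgeColorsAt (G.deleteEdges {s(x, y)}) c y
  have hcover : Set.Iio n ⊆ A ∪ B := by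
    intro a ha
    by_contra h
    rw [Set.mem_union, not_or] at h
    exact hG _ (hc.update_of_deleteEdges ha h.1 h.2)
  have hA : A.Finite := (Set.finite_Iio n).subset hc.edgeColorsAt_subset
  have hB : B.Finite := (Set.finite_Iio n).subset hc.edgeColorsAt_subset
  have hn : n ≤ (A ∪ B).ncard := by
    simpa using Set.ncard_le_ncard hcover (hA.union hB)
  have hunion := Set.ncard_union_add_ncard_inter A B hA hB
  rw [hc.ncard_edgeColorsAt, hc.ncard_edgeColorsAt] at hunion
  have hinter : (A ∩ B).ncard = 0 := by omega
  rw [Set.ncard_eq_zero (hA.inter_of_left B)] at hinter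
  exact Set.disjoint_iff_inter_eq_empty.2 hinter

def kempeGraph (G : SimpleGraph V) (c : Sym2 V → ℕ) (a b : ℕ) : SimpleGraph V where
  Adj v w := G.Adj v w ∧ (c s(v, w) = a ∨ c s(v, w) = b)
  symm := ⟨fun v w h => by rwa [G.adj_comm, Sym2.eq_swap]⟩
  loopless := ⟨fun v h => G.irrefl h.1⟩

open Classical in
noncomputable def kempeSwap (G : SimpleGraph V) (c : Sym2 V → ℕ) (a b : ℕ) (z : V)
    (e : Sym2 V) : ℕ :=
  if (c e = a ∨ c e = b) ∧ ∀ v ∈ e, (kempeGraph G c a b).Reachable z v then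
    Equiv.swap a b (c e)
  else c e

section kempe

variable {G : SimpleGraph V} {c : Sym2 V → ℕ} {a b : ℕ} {z v : V}

@[simp]
theorem kempeGraph_adj {w : V} :
    (kempeGraph G c a b).Adj v w ↔ G.Adj v w ∧ (c s(v, w) = a ∨ c s(v, w) = b) :=
  Iff.rfl

theorem kempeGraph_comm : kempeGraph G c a b = kempeGraph G c b a := by
  ext v w
  simp only [kempeGraph_adj, or_comm]

theorem kempeSwap_comm : kempeSwap G c a b z = kempeSwap G c b a z := by
  classical
  ext e
  rw [kempeSwap, kempeSwap, kempeGraph_comm, Equiv.swap_comm]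
  exact if_congr (and_congr_left' or_comm) rfl rfl

theorem kempeGraph_neighborSet_subsingleton {n : ℕ} (hc : IsProperEdgeColoring G n c)
    (hb : b ∉ edgeColorsAt G c v) : ((kempeGraph G c a b).neighborSet v).Subsingleton := by
  rintro w₁ ⟨h₁, hc₁⟩ w₂ ⟨h₂, hc₂⟩
  have hb₁ : c s(v, w₁) ≠ b := fun h => hb ⟨w₁, h₁, h⟩
  have hb₂ : c s(v, w₂) ≠ b := fun h => hb ⟨w₂, h₂, h⟩
  by_contra hne
  exact hc.ne_of_adj h₁ h₂ hne (by omega)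

theorem kempeGraph_eq_or_eq_or_eq_of_adj {n : ℕ} (hc : IsProperEdgeColoring G n c) {w p q r : V}
    (hp : (kempeGraph G c a b).Adj w p) (hq : (kempeGraph G c a b).Adj w q)
    (hr : (kempeGraph G c a b).Adj w r) : p = q ∨ p = r ∨ q = r := by
  rw [kempeGraph_adj] at hp hq hr
  by_contra! h
  have := hc.ne_of_adj hp.1 hq.1 h.1
  have := hc.ne_of_adj hp.1 hr.1 h.2.1
  have := hc.ne_of_adj hq.1 hr.1 h.2.2
  omega

theorem forall_mem_kempeGraph_reachable_iff {e : Sym2 V} (he : e ∈ G.edgeSet)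
    (hab : c e = a ∨ c e = b)
    (hv : v ∈ e) : (∀ w ∈ e, (kempeGraph G c a b).Reachable z w) ↔
      (kempeGraph G c a b).Reachable z v := by
  obtain ⟨w, rfl⟩ := Sym2.mem_iff_exists.1 hv
  have hvw : (kempeGraph G c a b).Adj v w := ⟨he, hab⟩
  rw [Sym2.forall_mem_pair]
  exact ⟨And.left, fun h => ⟨h, h.trans hvw.reachable⟩⟩

theorem kempeSwap_of_not_reachable (hv : ¬(kempeGraph G c a b).Reachable z v) {e : Sym2 V}
    (hve : v ∈ e) : kempeSwap G c a b z e = c e := by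
  rw [kempeSwap, if_neg fun h => hv (h.2 v hve)]

theorem kempeSwap_eq_iff_of_ne {d : ℕ} (hda : d ≠ a) (hdb : d ≠ b) (e : Sym2 V) :
    kempeSwap G c a b z e = d ↔ c e = d := by
  unfold kempeSwap
  split_ifs with h
  · rcases h.1 with h' | h' <;> simp [h'] <;> omega
  · rfl

theorem kempeSwap_eq_left_iff (hz : (kempeGraph G c a b).Reachable z v) {w : V}
    (hvw : G.Adj v w) : kempeSwap G c a b z s(v, w) = a ↔ c s(v, w) = b := by
  unfold kempeSwap
  by_cases hcol : c s(v, w) = a ∨ c s(v, w) = b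
  · rw [if_pos ⟨hcol,
      (forall_mem_kempeGraph_reachable_iff hvw hcol (Sym2.mem_mk_left v w)).2 hz⟩]
    rcases hcol with h | h <;> simp [h, eq_comm]
  · rw [if_neg fun h => hcol h.1]
    omega

theorem edgeColorsAt_kempeSwap_of_not_reachable (hv : ¬(kempeGraph G c a b).Reachable z v) :
    edgeColorsAt G (kempeSwap G c a b z) v = edgeColorsAt G c v :=
  Set.image_congr fun w _ => kempeSwap_of_not_reachable hv (Sym2.mem_mk_left v w)

theorem mem_edgeColorsAt_kempeSwap_iff_of_ne {d : ℕ} (hda : d ≠ a) (hdb : d ≠ b) :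
    d ∈ edgeColorsAt G (kempeSwap G c a b z) v ↔ d ∈ edgeColorsAt G c v :=
  exists_congr fun _ => and_congr_right' (kempeSwap_eq_iff_of_ne hda hdb _)

theorem left_mem_edgeColorsAt_kempeSwap_iff (hz : (kempeGraph G c a b).Reachable z v) :
    a ∈ edgeColorsAt G (kempeSwap G c a b z) v ↔ b ∈ edgeColorsAt G c v :=
  exists_congr fun _ => and_congr_right fun hvw => kempeSwap_eq_left_iff hz hvw

theorem isProperEdgeColoring_kempeSwap {n : ℕ} (hc : IsProperEdgeColoring G n c) (ha : a < n)
    (hb : b < n) (z : V) : IsProperEdgeColoring G n (kempeSwap G c a b z) := by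
  set P : Sym2 V → Prop :=
    fun e => (c e = a ∨ c e = b) ∧ ∀ w ∈ e, (kempeGraph G c a b).Reachable z w
  have hswap : ∀ e, P e → kempeSwap G c a b z e = Equiv.swap a b (c e) := fun e h => if_pos h
  have hkeep : ∀ e, ¬P e → kempeSwap G c a b z e = c e := fun e h => if_neg h
  have hswap_mem : ∀ e, P e → Equiv.swap a b (c e) = a ∨ Equiv.swap a b (c e) = b := by
    rintro e ⟨h | h, -⟩ <;> simp [h]
  -- An unswapped edge meeting a swapped one cannot be `a`/`b`-coloured: it would lie on the
  -- same Kempe chain.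
  have hmixed : ∀ e₁ ∈ G.edgeSet, ∀ e₂ ∈ G.edgeSet, ∀ v ∈ e₁, v ∈ e₂ → P e₁ → ¬P e₂ →
      kempeSwap G c a b z e₁ ≠ kempeSwap G c a b z e₂ := by
    intro e₁ he₁ e₂ he₂ v hv₁ hv₂ hP₁ hP₂
    have hcol : ¬(c e₂ = a ∨ c e₂ = b) := fun hcol =>
      hP₂ ⟨hcol, (forall_mem_kempeGraph_reachable_iff he₂ hcol hv₂).2
        ((forall_mem_kempeGraph_reachable_iff he₁ hP₁.1 hv₁).1 hP₁.2)⟩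
    rw [hswap e₁ hP₁, hkeep e₂ hP₂]
    rcases hswap_mem e₁ hP₁ with h | h <;> rw [h] <;> tauto
  refine ⟨fun e he => ?_, fun e₁ he₁ e₂ he₂ hne ⟨v, hv₁, hv₂⟩ => ?_⟩
  · by_cases hP : P e
    · rcases hswap_mem e hP with h | h <;> rw [hswap e hP, h] <;> assumption
    · exact (hkeep e hP).symm ▸ hc.1 e he
  · by_cases hP₁ : P e₁ <;> by_cases hP₂ : P e₂
    · rw [hswap e₁ hP₁, hswap e₂ hP₂]
      exact (Equiv.swap a b).injective.ne (hc.2 e₁ he₁ e₂ he₂ hne ⟨v, hv₁, hv₂⟩)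
    · exact hmixed e₁ he₁ e₂ he₂ v hv₁ hv₂ hP₁ hP₂
    · exact (hmixed e₂ he₂ e₁ he₁ v hv₂ hv₁ hP₂ hP₁).symm
    · rw [hkeep e₁ hP₁, hkeep e₂ hP₂]
      exact hc.2 e₁ he₁ e₂ he₂ hne ⟨v, hv₁, hv₂⟩

end kempe

namespace SimpleGraph

variable {K : SimpleGraph V}

-- Both paths must leave `v` through its only neighbour other than `z`, and so on inductively.
theorem Walk.IsPath.eq_of_adj_notMem_support
    (hK : ∀ w p q r, K.Adj w p → K.Adj w q → K.Adj w r → p = q ∨ p = r ∨ q = r)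
    {y u : V} (hy : (K.neighborSet y).Subsingleton) (hu : (K.neighborSet u).Subsingleton)
    {v z : V} {P : K.Walk v y} {Q : K.Walk v u} (hP : P.IsPath) (hQ : Q.IsPath)
    (hvz : K.Adj v z) (hzP : z ∉ P.support) (hzQ : z ∉ Q.support) : y = u := by
  induction P generalizing z with
  | nil =>
    cases Q with
    | nil => rfl
    | cons hq Q =>
      rw [Walk.support_cons, List.mem_cons, not_or] at hzQ
      exact (hzQ.2 (hy hq hvz ▸ Q.start_mem_support)).elim
  | @cons _ p _ hp P ih =>
    cases Q with
    | nil =>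
      rw [Walk.support_cons, List.mem_cons, not_or] at hzP
      exact (hzP.2 (hu hp hvz ▸ P.start_mem_support)).elim
    | @cons _ q _ hq Q =>
      rw [Walk.support_cons, List.mem_cons, not_or] at hzP hzQ
      have hpz : p ≠ z := fun h => hzP.2 (h ▸ P.start_mem_support)
      have hqz : q ≠ z := fun h => hzQ.2 (h ▸ Q.start_mem_support)
      obtain rfl : p = q := by
        rcases hK _ _ _ _ hvz hp hq with h | h | h
        · exact absurd h.symm hpz
        · exact absurd h.symm hqz
        · exact h
      rw [Walk.cons_isPath_iff] at hP hQ
      exact ih hy hP.1 hQ.1 hp.symm hP.2 hQ.2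

theorem not_reachable_of_reachable_of_neighborSet_subsingleton
    (hK : ∀ w p q r, K.Adj w p → K.Adj w q → K.Adj w r → p = q ∨ p = r ∨ q = r)
    {x y u : V} (hx : (K.neighborSet x).Subsingleton) (hy : (K.neighborSet y).Subsingleton)
    (hu : (K.neighborSet u).Subsingleton) (hxy : x ≠ y) (hxu : x ≠ u) (hyu : y ≠ u)
    (hRy : K.Reachable x y) : ¬K.Reachable x u := by
  classical
  rintro ⟨Q⟩
  obtain ⟨P⟩ := hRy
  obtain ⟨P, hP⟩ := P.toPath
  obtain ⟨Q, hQ⟩ := Q.toPath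
  cases P with
  | nil => exact hxy rfl
  | cons hp P =>
    cases Q with
    | nil => exact hxu rfl
    | cons hq Q =>
      obtain rfl := hx hp hq
      rw [Walk.cons_isPath_iff] at hP hQ
      exact hyu (hP.1.eq_of_adj_notMem_support hK hy hu hQ.1 hp.symm hP.2 hQ.2)

end SimpleGraph

section recolor

variable {G : SimpleGraph V} {x y u : V} {k : ℕ} {c : Sym2 V → ℕ}

theorem deleteEdges_adj_of_ne {w : V} (hxw : G.Adj x w) (hwy : w ≠ y) :
    (G.deleteEdges {s(x, y)}).Adj x w :=
  deleteEdges_adj.2 ⟨hxw, fun h => hwy (Sym2.congr_right.1 (Set.mem_singleton_iff.1 h))⟩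

theorem IsProperEdgeColoring.exists_extend_of_recolor
    (hc : IsProperEdgeColoring (G.deleteEdges {s(x, y)}) k c) (hxu : G.Adj x u) (huy : u ≠ y)
    {γ : ℕ} (hγ : γ < k) (hγx : γ ∉ edgeColorsAt (G.deleteEdges {s(x, y)}) c x)
    (hγu : γ ∉ edgeColorsAt (G.deleteEdges {s(x, y)}) c u)
    (hy : c s(x, u) ∉ edgeColorsAt (G.deleteEdges {s(x, y)}) c y) :
    ∃ c', IsProperEdgeColoring G k c' := by
  classical
  set G' := G.deleteEdges {s(x, y)}
  have hxu' : G'.Adj x u := deleteEdges_adj_of_ne hxu huy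
  have hyxu : y ∉ s(x, u) := by
    intro h
    rcases Sym2.mem_iff.1 h with rfl | rfl
    · exact hy ⟨u, hxu', rfl⟩
    · exact huy rfl
  set c₂ := Function.update c s(x, u) γ
  have hc₂_of_ne : ∀ e ≠ s(x, u), c₂ e = c e := fun e he => Function.update_of_ne he _ _
  have hc₂ : IsProperEdgeColoring G' k c₂ :=
    (hc.mono_left (deleteEdges_le _)).update_of_deleteEdges hγ
      (fun h => hγx (edgeColorsAt_mono (deleteEdges_le _) h))
      (fun h => hγu (edgeColorsAt_mono (deleteEdges_le _) h))
  have hx₂ : c s(x, u) ∉ edgeColorsAt G' c₂ x := by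
    rw [mem_edgeColorsAt]
    rintro ⟨w, hw, hcw⟩
    by_cases hwu : w = u
    · subst hwu
      exact hγx ⟨w, hxu', hcw.symm.trans (Function.update_self _ γ c)⟩
    · rw [hc₂_of_ne _ (hwu ∘ Sym2.congr_right.1)] at hcw
      exact hc.ne_of_adj hw hxu' hwu hcw
  have hy₂ : c s(x, u) ∉ edgeColorsAt G' c₂ y := by
    rw [mem_edgeColorsAt]
    rintro ⟨w, hw, hcw⟩
    rw [hc₂_of_ne _ fun h => hyxu (h ▸ Sym2.mem_mk_left y w)] at hcw
    exact hy ⟨w, hw, hcw⟩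
  exact ⟨_, hc₂.update_of_deleteEdges (hc.1 _ hxu') hx₂ hy₂⟩

theorem IsProperEdgeColoring.exists_extend_of_notMem_edgeColorsAt
    (hc : IsProperEdgeColoring (G.deleteEdges {s(x, y)}) k c)
    (hdisj : Disjoint (edgeColorsAt (G.deleteEdges {s(x, y)}) c x)
      (edgeColorsAt (G.deleteEdges {s(x, y)}) c y))
    (hxu : G.Adj x u) (huy : u ≠ y) {β γ : ℕ} (hβ : β < k)
    (hβu : β ∉ edgeColorsAt (G.deleteEdges {s(x, y)}) c u) (hγ : γ < k)
    (hγx : γ ∉ edgeColorsAt (G.deleteEdges {s(x, y)}) c x) :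
    ∃ c', IsProperEdgeColoring G k c' := by
  classical
  set G' := G.deleteEdges {s(x, y)}
  have hxu' : G'.Adj x u := deleteEdges_adj_of_ne hxu huy
  have hαx : c s(x, u) ∈ edgeColorsAt G' c x := ⟨u, hxu', rfl⟩
  have hαy : c s(x, u) ∉ edgeColorsAt G' c y := Set.disjoint_left.1 hdisj hαx
  have hαu : c s(x, u) ∈ edgeColorsAt G' c u := ⟨x, hxu'.symm, by rw [Sym2.eq_swap]⟩
  by_cases hβx : β ∉ edgeColorsAt G' c x
  · exact hc.exists_extend_of_recolor hxu huy hβ hβx hβu hαy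
  rw [not_not] at hβx
  have hβy : β ∉ edgeColorsAt G' c y := Set.disjoint_left.1 hdisj hβx
  have hxy : x ≠ y := fun h => hαy (h ▸ hαx)
  have hKx := kempeGraph_neighborSet_subsingleton (a := β) hc hγx
  have hKy := kempeGraph_neighborSet_subsingleton (a := γ) hc hβy
  have hKu := kempeGraph_neighborSet_subsingleton (a := γ) hc hβu
  rw [← kempeGraph_comm] at hKy hKu
  by_cases hRu : (kempeGraph G' c β γ).Reachable x u
  · have hRy : ¬(kempeGraph G' c β γ).Reachable x y := fun hRy =>
      not_reachable_of_reachable_of_neighborSet_subsingleton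
        (fun _ _ _ _ => kempeGraph_eq_or_eq_or_eq_of_adj hc)
        hKx hKy hKu hxy hxu'.ne (Ne.symm huy) hRy hRu
    refine ⟨_, (isProperEdgeColoring_kempeSwap hc hβ hγ x).update_of_deleteEdges hβ ?_ ?_⟩
    · rwa [left_mem_edgeColorsAt_kempeSwap_iff (Reachable.refl x)]
    · rwa [edgeColorsAt_kempeSwap_of_not_reachable hRy]
  · have hRu' : ¬(kempeGraph G' c β γ).Reachable u x := fun h => hRu h.symm
    have hαβ : c s(x, u) ≠ β := fun h => hβu (h ▸ hαu)
    have hαγ : c s(x, u) ≠ γ := fun h => hγx (h ▸ hαx)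
    refine (isProperEdgeColoring_kempeSwap hc hβ hγ u).exists_extend_of_recolor hxu huy hγ
      ?_ ?_ ?_
    · rwa [edgeColorsAt_kempeSwap_of_not_reachable hRu']
    · rwa [kempeSwap_comm, left_mem_edgeColorsAt_kempeSwap_iff (Reachable.refl u)]
    · rwa [(kempeSwap_eq_iff_of_ne hαβ hαγ _).2 rfl,
        mem_edgeColorsAt_kempeSwap_iff_of_ne hαβ hαγ]

end recolor

theorem IsCritical.deg_eq_maxDeg_of_adj [Finite V] {G : SimpleGraph V} (hG : IsCritical G)
    {x y u : V} (hxy : G.Adj x y) (hdeg : deg G x + deg G y = maxDeg G + 2) (hxu : G.Adj x u)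
    (huy : u ≠ y) : deg G u = maxDeg G := by
  set k := max (edgeChromaticNumber (G.deleteEdges {s(x, y)})) (maxDeg G)
  have hk : k < edgeChromaticNumber G :=
    max_lt (hG.edgeChromaticNumber_deleteEdges_lt hxy)
      ((maxDeg_le_edgeChromaticNumber G).lt_of_ne (Ne.symm hG.1))
  have hnone : ∀ c, ¬IsProperEdgeColoring G k c := fun _ hc =>
    (edgeChromaticNumber_le hc).not_gt hk
  obtain ⟨c, hc⟩ := exists_isProperEdgeColoring_edgeChromaticNumber (G.deleteEdges {s(x, y)})
  replace hc := hc.mono (le_max_left _ (maxDeg G))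
  have hΔk : maxDeg G ≤ k := le_max_right _ _
  have hdx := deg_deleteEdges_add_one hxy
  have hdy := deg_deleteEdges_add_one hxy.symm
  rw [Sym2.eq_swap] at hdy
  have hdisj := disjoint_edgeColorsAt_of_deleteEdges hnone hc (by omega)
  refine (deg_le_maxDeg G u).antisymm (not_lt.1 fun hu => ?_)
  obtain ⟨β, hβ, hβu⟩ := hc.exists_notMem_edgeColorsAt
    ((deg_mono (deleteEdges_le _) u).trans_lt (hu.trans_le hΔk))
  obtain ⟨γ, hγ, hγx⟩ := hc.exists_notMem_edgeColorsAt (v := x)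
    (by have := deg_le_maxDeg G x; omega)
  obtain ⟨c', hc'⟩ := hc.exists_extend_of_notMem_edgeColorsAt hdisj hxu huy hβ hβu hγ hγx
  exact hnone c' hc'

/-- If `G` is critical and `xy ∈ E(G)` with `d_G(x) + d_G(y) = Δ(G) + 2`,
then every vertex of `(N(x) ∪ N(y)) \ {x, y}` has degree `Δ(G)`. -/
theorem critical_neighbors_maxDegree [Fintype V] (G : SimpleGraph V)
    (hG : IsCritical G) {x y : V} (hxy : G.Adj x y)
    (hdeg : deg G x + deg G y = maxDeg G + 2) :
    ∀ u ∈ (G.neighborSet x ∪ G.neighborSet y) \ {x, y}, deg G u = maxDeg G := by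
  rintro u ⟨hu | hu, hxy'⟩
  · exact hG.deg_eq_maxDeg_of_adj hxy hdeg hu fun h => hxy' (Or.inr h)
  · exact hG.deg_eq_maxDeg_of_adj hxy.symm (by omega) hu fun h => hxy' (Or.inl h)
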